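/- arXiv:0802.2992 — 6 statements merged into one kernel-verified Lean document; each statement's English description precedes it below -/
import Mathlib

section
/- For every real number β > 1 and every nonnegative real x, the greedy algorithm produces a β-representation of x: there exist k ∈ ℤ and digits x_i ∈ {0,1,...,⌊β⌋} for i ≤ k with x_k ≥ 1 (when x ≥ 1) such that x = Σ_{i ≤ k} x_i β^i. -/
/-!
Put `y = x / β ^ k` with `β ^ k ≤ x < β ^ (k + 1)`. The greedy algorithm keeps a rescaled
remainder `s n`, with `s 0 = y` and `s (n + 1) = β {s n}`, emits the digit `⌊s n⌋`, and satisfies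
`y = ∑_{m < n} ⌊s m⌋ β⁻ᵐ + s n β⁻ⁿ`. Since `0 ≤ s n < β`, every digit is at most `⌊β⌋` and the
error term is at most `β¹⁻ⁿ → 0`, so the digits sum to `y`; placing digit `n` at position `k - n`
gives the representation of `x`.
-/

open Filter Finset Topology

namespace BetaExpansion

variable {β y : ℝ}

noncomputable def greedyRemainder (β y : ℝ) : ℕ → ℝ
  | 0 => y
  | n + 1 => β * Int.fract (greedyRemainder β y n)

noncomputable def greedyDigit (β y : ℝ) (n : ℕ) : ℕ :=
  ⌊greedyRemainder β y n⌋₊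

lemma greedyRemainder_nonneg (hβ : 0 ≤ β) (hy : 0 ≤ y) (n : ℕ) :
    0 ≤ greedyRemainder β y n := by
  cases n with
  | zero => exact hy
  | succ n => exact mul_nonneg hβ (Int.fract_nonneg _)

lemma greedyRemainder_lt (hβ : 0 < β) (hy : y < β) (n : ℕ) : greedyRemainder β y n < β := by
  cases n with
  | zero => exact hy
  | succ n => exact mul_lt_of_lt_one_right hβ (Int.fract_lt_one _)

lemma greedyDigit_le_floor (hβ : 0 < β) (hy : y < β) (n : ℕ) :
    (greedyDigit β y n : ℤ) ≤ ⌊β⌋ := by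
  rw [← Int.natCast_floor_eq_floor hβ.le]
  exact_mod_cast Nat.floor_le_floor (greedyRemainder_lt hβ hy n).le

lemma greedyDigit_zero : greedyDigit β y 0 = ⌊y⌋₊ := rfl

lemma sum_greedyDigit_add_greedyRemainder (hβ : 0 < β) (hy : 0 ≤ y) (n : ℕ) :
    ∑ m ∈ range n, (greedyDigit β y m : ℝ) * β⁻¹ ^ m + greedyRemainder β y n * β⁻¹ ^ n = y := by
  induction n with
  | zero => simp [greedyRemainder]
  | succ n ih =>
    have hstep : greedyRemainder β y n * β⁻¹ ^ n =
        greedyDigit β y n * β⁻¹ ^ n + greedyRemainder β y (n + 1) * β⁻¹ ^ (n + 1) := by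
      have hfloor : (greedyDigit β y n : ℝ) = ⌊greedyRemainder β y n⌋ := by
        rw [greedyDigit, ← Int.natCast_floor_eq_floor (greedyRemainder_nonneg hβ.le hy n)]
        rfl
      rw [greedyRemainder, hfloor, ← Int.self_sub_fract, pow_succ]
      field_simp
      ring
    rw [sum_range_succ, add_assoc, ← hstep, ih]

lemma hasSum_greedyDigit (hβ : 1 < β) (hy₀ : 0 ≤ y) (hy : y < β) :
    HasSum (fun n => (greedyDigit β y n : ℝ) * β⁻¹ ^ n) y := by
  have hβ₀ : 0 < β := zero_lt_one.trans hβ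
  rw [hasSum_iff_tendsto_nat_of_nonneg (fun n => by positivity)]
  have herror : Tendsto (fun n => greedyRemainder β y n * β⁻¹ ^ n) atTop (𝓝 0) := by
    have hgeom : Tendsto (fun n => β * β⁻¹ ^ n) atTop (𝓝 0) := by
      simpa using (tendsto_pow_atTop_nhds_zero_of_lt_one (inv_nonneg.2 hβ₀.le)
        (inv_lt_one_of_one_lt₀ hβ)).const_mul β
    refine squeeze_zero (fun n => mul_nonneg (greedyRemainder_nonneg hβ₀.le hy₀ n)
      (by positivity)) (fun n => ?_) hgeom
    gcongr
    exact (greedyRemainder_lt hβ₀ hy n).le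
  have hpartial : (fun n => ∑ m ∈ range n, (greedyDigit β y m : ℝ) * β⁻¹ ^ m) =
      fun n => y - greedyRemainder β y n * β⁻¹ ^ n :=
    funext fun n => eq_sub_of_add_eq (sum_greedyDigit_add_greedyRemainder hβ₀ hy₀ n)
  rw [hpartial]
  simpa using (tendsto_const_nhds (x := y)).sub herror

theorem exists_digits_hasSum_zpow (hβ : 1 < β) {x : ℝ} {k : ℤ} (hx : 0 ≤ x)
    (hxk : x < β ^ (k + 1)) :
    ∃ d : ℤ → ℕ, (∀ i, (d i : ℤ) ≤ ⌊β⌋) ∧ (∀ i, k < i → d i = 0) ∧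
      (β ^ k ≤ x → 1 ≤ d k) ∧ HasSum (fun i => (d i : ℝ) * β ^ i) x := by
  have hβ₀ : 0 < β := zero_lt_one.trans hβ
  have hβk : 0 < β ^ k := zpow_pos hβ₀ k
  set y := x / β ^ k
  have hy : y < β := by
    rwa [div_lt_iff₀ hβk, ← zpow_one_add₀ hβ₀.ne', add_comm]
  set position : ℕ → ℤ := fun n => k - n
  have hinj : Function.Injective position := fun m n h => by simpa [position] using h
  have hrange : ∀ i, k < i → ¬∃ n, position n = i := by
    rintro i hi ⟨n, rfl⟩
    simp only [position] at hi
    omega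
  set d := Function.extend position (greedyDigit β y) 0
  have hd : ∀ n, d (position n) = greedyDigit β y n := hinj.extend_apply _ _
  refine ⟨d, fun i => ?_, fun i hi => Function.extend_apply' _ _ _ (hrange i hi), fun hkx => ?_, ?_⟩
  · by_cases hi : ∃ n, position n = i
    · obtain ⟨n, rfl⟩ := hi
      rw [hd]
      exact greedyDigit_le_floor hβ₀ hy n
    · simpa [d, Function.extend_apply' _ _ _ hi] using Int.floor_nonneg.2 hβ₀.le
  · have hk : position 0 = k := by simp [position]
    rw [← hk, hd, greedyDigit_zero, Nat.one_le_floor_iff]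
    exact (one_le_div hβk).2 hkx
  · have hterm : (fun i => (d i : ℝ) * β ^ i) ∘ position =
        fun n => β ^ k * ((greedyDigit β y n : ℝ) * β⁻¹ ^ n) := by
      ext n
      rw [Function.comp_apply, hd, zpow_sub₀ hβ₀.ne', zpow_natCast, inv_pow]
      ring
    rw [← hinj.hasSum_iff fun i hi => by simp [d, Function.extend_apply' _ _ _ hi], hterm,
      ← mul_div_cancel₀ x hβk.ne']
    exact (hasSum_greedyDigit hβ (div_nonneg hx hβk.le) hy).mul_left (β ^ k)

end BetaExpansion

/-- For every real β > 1 and every nonnegative real x, the greedy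
algorithm produces a β-representation of x: there exist k ∈ ℤ and digits
x_i ∈ {0,…,⌊β⌋} for i ≤ k, vanishing for i > k, with x_k ≥ 1 when x ≥ 1, such
that x = Σ_{i ≤ k} x_i β^i. -/
theorem greedy_beta_representation_exists (β : ℝ) (hβ : 1 < β) (x : ℝ) (hx : 0 ≤ x) :
    ∃ (k : ℤ) (d : ℤ → ℕ),
      (∀ i : ℤ, i ≤ k → (d i : ℤ) ≤ ⌊β⌋) ∧
      (∀ i : ℤ, k < i → d i = 0) ∧
      (1 ≤ x → 1 ≤ d k) ∧
      x = ∑' i : ℤ, (d i : ℝ) * β ^ i := by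
  -- Locating `max x 1` rather than `x` covers `x = 0` and still gives `β ^ k ≤ x` when `1 ≤ x`.
  obtain ⟨k, hk_le, hk_lt⟩ := exists_mem_Ico_zpow (zero_lt_one.trans_le (le_max_right x 1)) hβ
  obtain ⟨d, hd_le, hd_zero, hd_lead, hsum⟩ :=
    BetaExpansion.exists_digits_hasSum_zpow hβ hx ((le_max_left x 1).trans_lt hk_lt)
  refine ⟨k, d, fun i _ => hd_le i, hd_zero, fun hx₁ => hd_lead ?_, hsum.tsum_eq.symm⟩
  rwa [max_eq_left hx₁] at hk_le
end

section
/- (Parry condition) Let β > 1 and let d*_β(1) be the infinite Rényi expansion of unity. A β-representation Σ_{i ≤ k} x_i β^i of a nonnegative real x is the β-expansion of x if and only if for every i ≤ k the infinite word x_i x_{i-1} ⋯ is lexicographically smaller than d*_β(1). -/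
/-- The map `T_β(x) = {βx}` (fractional part of `βx`). -/
noncomputable def Tbeta (β x : ℝ) : ℝ := Int.fract (β * x)

/-- The Rényi expansion of unity in base β: `t_{i+1} = ⌊β T_β^i(1)⌋`
(0-indexed, so `renyiDigit β i` is the digit `t_{i+1}` of the paper). -/
noncomputable def renyiDigit (β : ℝ) (i : ℕ) : ℤ := ⌊β * (Tbeta β)^[i] 1⌋

open Classical in
/-- The infinite Rényi expansion of unity `d*_β(1)` (0-indexed): if
`d_β(1) = t_1 ⋯ t_m` is finite (with `t_m ≠ 0`, i.e. `T_β^m(1) = 0` with `m`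
minimal), then `d*_β(1) = (t_1 ⋯ t_{m-1} (t_m - 1))^ω`; otherwise
`d*_β(1) = d_β(1)`. -/
noncomputable def dstar (β : ℝ) : ℕ → ℤ :=
  if ∃ m : ℕ, 0 < m ∧ (Tbeta β)^[m] 1 = 0 then
    let m := sInf {m : ℕ | 0 < m ∧ (Tbeta β)^[m] 1 = 0}
    fun i => if i % m = m - 1 then renyiDigit β (m - 1) - 1 else renyiDigit β (i % m)
  else fun i => renyiDigit β i

/-- Strict lexicographic order on (right-)infinite words. -/
def LexLt (w v : ℕ → ℤ) : Prop :=
  ∃ n : ℕ, (∀ j : ℕ, j < n → w j = v j) ∧ w n < v n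

/-- `d` is the greedy β-expansion of `x`: a representation whose digits vanish
above some index and which satisfies the greedy condition that every tail
`Σ_{j < i} d_j β^j` is `< β^i`. -/
def IsBetaExpansion (β x : ℝ) (d : ℤ → ℕ) : Prop :=
  (∃ K : ℤ, ∀ i : ℤ, K < i → d i = 0) ∧
  x = (∑' i : ℤ, (d i : ℝ) * β ^ i) ∧
  ∀ i : ℤ, (∑' j : {j : ℤ // j < i}, (d j : ℝ) * β ^ (j : ℤ)) < β ^ i

/-!
Put `r = β⁻¹` and let `w n ∈ (0, 1]` be the remainders of `d*_β(1)`, so that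
`β w n = d*_n + w (n+1)`, `w 0 = 1 = Σ d*_n r^(n+1)` and `Σ_{n<N} d*_n r^(n+1) = 1 - r^N w N`.
The greedy condition says that every tail word `d_i d_{i-1} ⋯` has value `v_i < 1` as a
β-fraction. A word that is not below `d*_β(1)` has value `≥ 1`, since its first excess digit
contributes `r^(n+1) ≥ r^(n+1) w (n+1)`. Conversely, if every tail word is below `d*_β(1)`,
comparing at the first differing digit `n` gives `v_i - 1 < r^(n+1) (v_{i-n-1} - 1)`; as the
values are bounded, a supremum argument forces `v_i < 1`.
-/

open Finset Filter Topology

theorem lexLt_iff_toLex_lt {a b : ℕ → ℤ} : LexLt a b ↔ toLex a < toLex b := Iff.rfl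

theorem not_lexLt_iff {a b : ℕ → ℤ} : ¬ LexLt a b ↔ a = b ∨ LexLt b a := by
  rw [lexLt_iff_toLex_lt, lexLt_iff_toLex_lt]
  exact not_lt.trans <| le_iff_eq_or_lt.trans <| or_congr_left <| toLex_inj.trans eq_comm

theorem LexLt.head_le {a b : ℕ → ℤ} (h : LexLt a b) : a 0 ≤ b 0 := by
  obtain ⟨n, heq, hlt⟩ := h
  rcases n.eq_zero_or_pos with rfl | hn
  · exact hlt.le
  · exact (heq 0 hn).le

theorem tsum_subtype_lt_int {α : Type*} [AddCommMonoid α] [TopologicalSpace α] (f : ℤ → α)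
    (i : ℤ) : ∑' j : {j : ℤ // j < i}, f j = ∑' n : ℕ, f (i - 1 - n) :=
  let e : ℕ ≃ {j : ℤ // j < i} :=
    { toFun n := ⟨i - 1 - n, by omega⟩
      invFun j := (i - 1 - j).toNat
      left_inv n := by simp only; omega
      right_inv j := Subtype.ext <| by have := j.2; simp only; omega }
  (e.tsum_eq fun j => f j).symm

theorem zpow_sub_natCast_eq_mul_inv_pow {β : ℝ} (hβ : β ≠ 0) (i : ℤ) (n : ℕ) :
    β ^ (i - n) = β ^ i * β⁻¹ ^ n := by
  rw [zpow_sub₀ hβ, zpow_natCast, div_eq_mul_inv, inv_pow]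

theorem forall_lt_zero_of_lt_mul {ι : Type*} {s : Set ι} {f : ι → ℝ} {r : ℝ} (hr : r < 1)
    (hf : BddAbove (f '' s)) (h : ∀ i ∈ s, ∃ j ∈ s, ∃ c, 0 ≤ c ∧ c ≤ r ∧ f i < c * f j) :
    ∀ i ∈ s, f i < 0 := by
  intro i hi
  set S := sSup (f '' s)
  have hle : ∀ j ∈ s, f j ≤ S := fun j hj => le_csSup hf ⟨j, hj, rfl⟩
  have hS : S ≤ 0 := by
    by_contra! hS
    have : S ≤ r * S := csSup_le ⟨f i, i, hi, rfl⟩ <| by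
      rintro _ ⟨i, hi, rfl⟩
      obtain ⟨j, hj, c, hc0, hcr, hlt⟩ := h i hi
      calc f i ≤ c * f j := hlt.le
        _ ≤ c * S := mul_le_mul_of_nonneg_left (hle j hj) hc0
        _ ≤ r * S := mul_le_mul_of_nonneg_right hcr hS.le
    nlinarith
  obtain ⟨j, hj, c, hc0, -, hlt⟩ := h i hi
  calc f i < c * f j := hlt
    _ ≤ c * S := mul_le_mul_of_nonneg_left (hle j hj) hc0
    _ ≤ 0 := mul_nonpos_of_nonneg_of_nonpos hc0 hS

noncomputable def wordValue (β : ℝ) (a : ℕ → ℤ) : ℝ := ∑' n, (a n : ℝ) * β⁻¹ ^ (n + 1)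

section WordValue

variable {β : ℝ} {a : ℕ → ℤ}

theorem wordValue_nonneg (hβ : 0 ≤ β) (ha : ∀ n, 0 ≤ a n) : 0 ≤ wordValue β a :=
  tsum_nonneg fun n => mul_nonneg (Int.cast_nonneg_iff.mpr (ha n)) (by positivity)

theorem wordValue_eq_sum_add (hs : Summable fun n => (a n : ℝ) * β⁻¹ ^ (n + 1)) (N : ℕ) :
    wordValue β a = ∑ n ∈ range N, (a n : ℝ) * β⁻¹ ^ (n + 1)
      + β⁻¹ ^ N * wordValue β (fun n => a (n + N)) := by
  rw [wordValue, ← hs.sum_add_tsum_nat_add N, wordValue, ← tsum_mul_left]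
  congr 1
  exact tsum_congr fun n => by ring

theorem wordValue_le (hβ : 1 < β) {M : ℤ} (ha : ∀ n, 0 ≤ a n) (haM : ∀ n, a n ≤ M) :
    wordValue β a ≤ M / (β - 1) := by
  have hr : 0 < β⁻¹ := by positivity
  have hgeom : HasSum (fun n : ℕ => (M : ℝ) * β⁻¹ ^ (n + 1)) (M / (β - 1)) := by
    have hsum := (hasSum_geometric_of_lt_one hr.le (inv_lt_one_of_one_lt₀ hβ)).mul_left
      ((M : ℝ) * β⁻¹)
    have hval : (M : ℝ) * β⁻¹ * (1 - β⁻¹)⁻¹ = M / (β - 1) := by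
      field_simp [(by linarith : β - 1 ≠ 0)]
    simpa only [hval, pow_succ', mul_assoc] using hsum
  have hle : ∀ n, (a n : ℝ) * β⁻¹ ^ (n + 1) ≤ M * β⁻¹ ^ (n + 1) := fun n =>
    mul_le_mul_of_nonneg_right (Int.cast_le.mpr (haM n)) (by positivity)
  have hs : Summable fun n => (a n : ℝ) * β⁻¹ ^ (n + 1) :=
    hgeom.summable.of_nonneg_of_le (fun n => mul_nonneg (Int.cast_nonneg_iff.mpr (ha n))
      (by positivity)) hle
  exact hgeom.tsum_eq ▸ hs.tsum_le_tsum hle hgeom.summable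

end WordValue

theorem iterate_Tbeta_one_nonneg (β : ℝ) (n : ℕ) : 0 ≤ (Tbeta β)^[n] 1 := by
  cases n with
  | zero => exact zero_le_one
  | succ n => rw [Function.iterate_succ_apply']; exact Int.fract_nonneg _

theorem iterate_Tbeta_one_le_one (β : ℝ) (n : ℕ) : (Tbeta β)^[n] 1 ≤ 1 := by
  cases n with
  | zero => exact le_rfl
  | succ n => rw [Function.iterate_succ_apply']; exact (Int.fract_lt_one _).le

theorem iterate_Tbeta_one_pos {β : ℝ} {n : ℕ} (h : ¬ (0 < n ∧ (Tbeta β)^[n] 1 = 0)) :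
    0 < (Tbeta β)^[n] 1 := by
  rcases n.eq_zero_or_pos with rfl | hn
  · exact zero_lt_one
  · exact (iterate_Tbeta_one_nonneg β n).lt_of_ne' fun h0 => h ⟨hn, h0⟩

theorem mul_iterate_Tbeta_one (β : ℝ) (n : ℕ) :
    β * (Tbeta β)^[n] 1 = renyiDigit β n + (Tbeta β)^[n + 1] 1 := by
  rw [Function.iterate_succ_apply', renyiDigit, Tbeta, Int.floor_add_fract]

open Classical in
/-- The remainders `w n = Σ_j d*_{n+j} β^(-(j+1))` of `d*_β(1)`, read off the `T_β`-orbit of `1`. -/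
noncomputable def dstarRemainder (β : ℝ) : ℕ → ℝ :=
  if ∃ m : ℕ, 0 < m ∧ (Tbeta β)^[m] 1 = 0 then
    let m := sInf {m : ℕ | 0 < m ∧ (Tbeta β)^[m] 1 = 0}
    fun n => (Tbeta β)^[n % m] 1
  else fun n => (Tbeta β)^[n] 1

theorem dstarRemainder_zero (β : ℝ) : dstarRemainder β 0 = 1 := by
  unfold dstarRemainder
  split <;> simp

theorem dstarRemainder_pos (β : ℝ) (n : ℕ) : 0 < dstarRemainder β n := by
  unfold dstarRemainder
  split
  case isTrue h =>
    exact iterate_Tbeta_one_pos <| Nat.notMem_of_lt_sInf <| Nat.mod_lt _ (Nat.sInf_mem h).1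
  case isFalse h => exact iterate_Tbeta_one_pos fun hn => h ⟨n, hn⟩

theorem dstarRemainder_le_one (β : ℝ) (n : ℕ) : dstarRemainder β n ≤ 1 := by
  unfold dstarRemainder
  split <;> exact iterate_Tbeta_one_le_one β _

theorem mul_dstarRemainder (β : ℝ) (n : ℕ) :
    β * dstarRemainder β n = dstar β n + dstarRemainder β (n + 1) := by
  unfold dstarRemainder dstar
  split
  case isTrue h =>
    set m := sInf {m : ℕ | 0 < m ∧ (Tbeta β)^[m] 1 = 0}
    obtain ⟨hm, hTm⟩ : 0 < m ∧ (Tbeta β)^[m] 1 = 0 := Nat.sInf_mem h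
    have hlt := Nat.mod_lt n hm
    simp only
    rw [← Nat.mod_add_mod n m 1]
    by_cases hlast : n % m = m - 1
    · have hsucc : n % m + 1 = m := by omega
      rw [if_pos hlast, hsucc, Nat.mod_self, hlast, mul_iterate_Tbeta_one, Nat.sub_add_cancel hm,
        hTm, Function.iterate_zero_apply]
      push_cast
      ring
    · rw [if_neg hlast, Nat.mod_eq_of_lt (by omega : n % m + 1 < m), mul_iterate_Tbeta_one]
  case isFalse => exact mul_iterate_Tbeta_one β n

theorem dstar_nonneg {β : ℝ} (hβ : 0 < β) (n : ℕ) : 0 ≤ dstar β n := by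
  have hrec := mul_dstarRemainder β n
  have : (-1 : ℝ) < dstar β n := by
    nlinarith [dstarRemainder_pos β n, dstarRemainder_le_one β (n + 1)]
  have : (-1 : ℤ) < dstar β n := by exact_mod_cast this
  omega

theorem sum_dstar {β : ℝ} (hβ : β ≠ 0) (N : ℕ) :
    ∑ n ∈ range N, (dstar β n : ℝ) * β⁻¹ ^ (n + 1) = 1 - β⁻¹ ^ N * dstarRemainder β N := by
  induction N with
  | zero => simp [dstarRemainder_zero]
  | succ N ih =>
    rw [sum_range_succ, ih]
    linear_combination (-β⁻¹ ^ (N + 1)) * mul_dstarRemainder β N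
      + β⁻¹ ^ N * dstarRemainder β N * inv_mul_cancel₀ hβ

theorem hasSum_dstar {β : ℝ} (hβ : 1 < β) :
    HasSum (fun n => (dstar β n : ℝ) * β⁻¹ ^ (n + 1)) 1 := by
  have hr : 0 < β⁻¹ := by positivity
  refine (hasSum_iff_tendsto_nat_of_nonneg (fun n => mul_nonneg
    (Int.cast_nonneg_iff.mpr (dstar_nonneg (by linarith) n)) (by positivity)) 1).mpr ?_
  simp only [sum_dstar (by linarith : β ≠ 0)]
  have hpow := tendsto_pow_atTop_nhds_zero_of_lt_one hr.le (inv_lt_one_of_one_lt₀ hβ)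
  have hrem : Tendsto (fun N => β⁻¹ ^ N * dstarRemainder β N) atTop (𝓝 0) :=
    squeeze_zero (fun N => mul_nonneg (by positivity) (dstarRemainder_pos β N).le)
      (fun N => mul_le_of_le_one_right (by positivity) (dstarRemainder_le_one β N)) hpow
  simpa using tendsto_const_nhds.sub hrem

theorem sum_range_succ_of_eq_dstar {β : ℝ} (hβ : β ≠ 0) {a : ℕ → ℤ} {n : ℕ}
    (heq : ∀ j < n, a j = dstar β j) :
    ∑ j ∈ range (n + 1), (a j : ℝ) * β⁻¹ ^ (j + 1)
      = 1 - β⁻¹ ^ (n + 1) * dstarRemainder β (n + 1) + (a n - dstar β n) * β⁻¹ ^ (n + 1) := by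
  rw [sum_range_succ, sum_congr rfl fun j hj => by rw [heq j (mem_range.mp hj)], sum_dstar hβ]
  linear_combination (-β⁻¹ ^ (n + 1)) * mul_dstarRemainder β n
    + β⁻¹ ^ n * dstarRemainder β n * inv_mul_cancel₀ hβ

section Parry

variable {β : ℝ}

theorem lexLt_dstar_of_wordValue_lt_one (hβ : 1 < β) {a : ℕ → ℤ} (ha : ∀ n, 0 ≤ a n)
    (hs : Summable fun n => (a n : ℝ) * β⁻¹ ^ (n + 1)) (hlt : wordValue β a < 1) :
    LexLt a (dstar β) := by
  by_contra hnot
  rcases not_lexLt_iff.mp hnot with rfl | ⟨n, heq, hgt⟩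
  · exact hlt.not_ge (hasSum_dstar hβ).tsum_eq.ge
  · have hsum := sum_range_succ_of_eq_dstar (by positivity) fun j hj => (heq j hj).symm
    have hdigit : (dstar β n : ℝ) + 1 ≤ a n := by exact_mod_cast hgt
    have hpartial : ∑ j ∈ range (n + 1), (a j : ℝ) * β⁻¹ ^ (j + 1) ≤ wordValue β a :=
      hs.sum_le_tsum _ fun j _ => mul_nonneg (Int.cast_nonneg_iff.mpr (ha j)) (by positivity)
    have hr : 0 < β⁻¹ ^ (n + 1) := by positivity
    nlinarith [dstarRemainder_le_one β (n + 1)]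

theorem wordValue_sub_one_lt_of_lexLt_dstar (hβ : 1 < β) {a : ℕ → ℤ}
    (hs : Summable fun n => (a n : ℝ) * β⁻¹ ^ (n + 1)) (hlex : LexLt a (dstar β)) :
    ∃ n : ℕ, wordValue β a - 1 < β⁻¹ ^ (n + 1) * (wordValue β (fun j => a (j + (n + 1))) - 1) := by
  obtain ⟨n, heq, hlt⟩ := hlex
  refine ⟨n, ?_⟩
  have hsum := sum_range_succ_of_eq_dstar (by positivity) heq
  have hdigit : (a n : ℝ) + 1 ≤ dstar β n := by exact_mod_cast hlt
  have hr : 0 < β⁻¹ ^ (n + 1) := by positivity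
  rw [wordValue_eq_sum_add hs (n + 1), hsum]
  nlinarith [dstarRemainder_pos β (n + 1)]

def tailWord (d : ℤ → ℕ) (i : ℤ) : ℕ → ℤ := fun n => d (i - n)

variable {d : ℤ → ℕ}

theorem tailWord_nonneg (i : ℤ) (n : ℕ) : 0 ≤ tailWord d i n := Int.natCast_nonneg _

theorem tailWord_add (i : ℤ) (N : ℕ) : (fun n => tailWord d i (n + N)) = tailWord d (i - N) := by
  funext n
  simp only [tailWord, Nat.cast_add, sub_add_eq_sub_sub_swap]

theorem summable_tailWord (hβ : β ≠ 0) (hsum : Summable fun i : ℤ => (d i : ℝ) * β ^ i) (i : ℤ) :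
    Summable fun n => (tailWord d i n : ℝ) * β⁻¹ ^ (n + 1) := by
  have hinj : Function.Injective fun n : ℕ => i - n := fun m n h => by simpa using h
  refine ((hsum.comp_injective hinj).mul_left (β ^ (-(i + 1)))).congr fun n => ?_
  simp only [tailWord, Function.comp_apply, Int.cast_natCast]
  rw [zpow_sub_natCast_eq_mul_inv_pow hβ, zpow_neg, zpow_add_one₀ hβ, pow_succ]
  field_simp

theorem tsum_subtype_lt_eq_mul_wordValue (hβ : β ≠ 0) (i : ℤ) :
    ∑' j : {j : ℤ // j < i}, (d j : ℝ) * β ^ (j : ℤ)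
      = β ^ i * wordValue β (tailWord d (i - 1)) := by
  rw [tsum_subtype_lt_int (fun j => (d j : ℝ) * β ^ j), wordValue, ← tsum_mul_left]
  refine tsum_congr fun n => ?_
  rw [tailWord, sub_sub, ← Nat.cast_one, ← Nat.cast_add, zpow_sub_natCast_eq_mul_inv_pow hβ,
    Int.cast_natCast]
  ring

theorem greedy_iff_forall_wordValue_tailWord_lt_one (hβ : 0 < β) :
    (∀ i : ℤ, ∑' j : {j : ℤ // j < i}, (d j : ℝ) * β ^ (j : ℤ) < β ^ i)
      ↔ ∀ i : ℤ, wordValue β (tailWord d i) < 1 := by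
  simp only [tsum_subtype_lt_eq_mul_wordValue hβ.ne', mul_lt_iff_lt_one_right (zpow_pos hβ _)]
  exact ⟨fun h i => by simpa using h (i + 1), fun h i => h (i - 1)⟩

theorem forall_wordValue_tailWord_lt_one_iff_of_le (hβ : 1 < β) {k : ℤ}
    (hk : ∀ i, k < i → d i = 0) (hsum : Summable fun i : ℤ => (d i : ℝ) * β ^ i) :
    (∀ i : ℤ, wordValue β (tailWord d i) < 1) ↔ ∀ i ≤ k, wordValue β (tailWord d i) < 1 := by
  refine ⟨fun h i _ => h i, fun h i => ?_⟩
  rcases le_or_gt i k with hik | hik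
  · exact h i hik
  obtain ⟨N, rfl⟩ : ∃ N : ℕ, i = k + N := ⟨(i - k).toNat, by omega⟩
  have hzero : ∀ n ∈ range N, (tailWord d (k + N) n : ℝ) * β⁻¹ ^ (n + 1) = 0 := fun n hn => by
    rw [tailWord, hk _ (by have := mem_range.mp hn; omega)]
    simp
  rw [wordValue_eq_sum_add (summable_tailWord (by positivity) hsum _) N, sum_eq_zero hzero,
    zero_add, tailWord_add, add_sub_cancel_right]
  exact mul_lt_one_of_nonneg_of_lt_one_right (pow_le_one₀ (by positivity)
    (inv_le_one_of_one_le₀ hβ.le)) (wordValue_nonneg (by positivity) (tailWord_nonneg _))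
    (h k le_rfl)

theorem wordValue_tailWord_lt_one_of_lexLt_dstar (hβ : 1 < β) {k : ℤ}
    (hsum : Summable fun i : ℤ => (d i : ℝ) * β ^ i)
    (hlex : ∀ i ≤ k, LexLt (tailWord d i) (dstar β)) :
    ∀ i ≤ k, wordValue β (tailWord d i) < 1 := by
  have hdigit (j : ℤ) (hj : j ≤ k) : (d j : ℤ) ≤ dstar β 0 := by
    simpa [tailWord] using (hlex j hj).head_le
  have hbdd : BddAbove ((fun i => wordValue β (tailWord d i) - 1) '' Set.Iic k) := by
    refine ⟨dstar β 0 / (β - 1) - 1, ?_⟩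
    rintro _ ⟨i, hi, rfl⟩
    exact sub_le_sub_right (wordValue_le hβ (tailWord_nonneg i)
      fun n => hdigit _ (by simp only [Set.mem_Iic] at hi; omega)) 1
  have hcontract := forall_lt_zero_of_lt_mul (inv_lt_one_of_one_lt₀ hβ) hbdd fun i hi => by
    obtain ⟨n, hn⟩ := wordValue_sub_one_lt_of_lexLt_dstar hβ
      (summable_tailWord (by positivity) hsum i) (hlex i hi)
    rw [tailWord_add] at hn
    exact ⟨i - (n + 1 : ℕ), by simp only [Set.mem_Iic] at hi ⊢; omega, β⁻¹ ^ (n + 1),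
      by positivity, pow_le_of_le_one (by positivity) (inv_le_one_of_one_le₀ hβ.le)
      n.succ_ne_zero, hn⟩
  exact fun i hi => sub_neg.mp (hcontract i hi)

end Parry

theorem parry_condition_general (β : ℝ) (hβ : 1 < β) (x : ℝ)
    (d : ℤ → ℕ) (k : ℤ) (hk : ∀ i : ℤ, k < i → d i = 0)
    (hsum : Summable (fun i : ℤ => (d i : ℝ) * β ^ i))
    (hrep : x = ∑' i : ℤ, (d i : ℝ) * β ^ i) :
    IsBetaExpansion β x d ↔
      ∀ i : ℤ, i ≤ k → LexLt (fun n : ℕ => (d (i - n) : ℤ)) (dstar β) := by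
  rw [IsBetaExpansion, greedy_iff_forall_wordValue_tailWord_lt_one (by positivity),
    forall_wordValue_tailWord_lt_one_iff_of_le hβ hk hsum]
  constructor
  · rintro ⟨-, -, hlt⟩ i hi
    exact lexLt_dstar_of_wordValue_lt_one hβ (tailWord_nonneg i)
      (summable_tailWord (by positivity) hsum i) (hlt i hi)
  · exact fun hlex => ⟨⟨k, hk⟩, hrep, wordValue_tailWord_lt_one_of_lexLt_dstar hβ hsum hlex⟩

/-- Parry condition: a β-representation `Σ_{i ≤ k} d_i β^i` of a
nonnegative real `x` is the β-expansion of `x` iff for every `i ≤ k` the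
infinite word `d_i d_{i-1} ⋯` is lexicographically smaller than `d*_β(1)`. -/
theorem parry_condition (β : ℝ) (hβ : 1 < β) (x : ℝ) (hx : 0 ≤ x)
    (d : ℤ → ℕ) (k : ℤ) (hk : ∀ i : ℤ, k < i → d i = 0)
    (hsum : Summable (fun i : ℤ => (d i : ℝ) * β ^ i))
    (hrep : x = ∑' i : ℤ, (d i : ℝ) * β ^ i) :
    IsBetaExpansion β x d ↔
      ∀ i : ℤ, i ≤ k → LexLt (fun n : ℕ => (d (i - n) : ℤ)) (dstar β) :=
  parry_condition_general β hβ x d k hk hsum hrep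
end

section
/- Every Parry number β (a real β > 1 whose Rényi expansion of unity is eventually periodic) is an algebraic integer: it is a root of a monic polynomial with integer coefficients, namely its Parry polynomial. -/
open Polynomial

noncomputable def digitPoly {R : Type*} [CommRing R] (t : ℕ → R) : ℕ → R[X]
  | 0 => 1
  | k + 1 => X * digitPoly t k - C (t k)

section digitPoly

variable {R : Type*} [CommRing R] (t : ℕ → R)

theorem digitPoly_zero : digitPoly t 0 = 1 := rfl

theorem digitPoly_succ (k : ℕ) : digitPoly t (k + 1) = X * digitPoly t k - C (t k) := rfl

theorem monic_digitPoly_and_natDegree [Nontrivial R] (k : ℕ) :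
    (digitPoly t k).Monic ∧ (digitPoly t k).natDegree = k := by
  induction k with
  | zero => simp [digitPoly_zero]
  | succ k ih =>
    obtain ⟨hmon, hdeg⟩ := ih
    have hXmon : (X * digitPoly t k).Monic := monic_X.mul hmon
    have hXdeg : (X * digitPoly t k).natDegree = k + 1 := by
      rw [natDegree_X_mul hmon.ne_zero, hdeg]
    refine ⟨hXmon.sub_of_left ?_, by rw [digitPoly_succ, natDegree_sub_C, hXdeg]⟩
    exact degree_C_le.trans_lt (natDegree_pos_iff_degree_pos.mp (by omega))

theorem monic_digitPoly_sub [Nontrivial R] {m n : ℕ} (hmn : m < n) :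
    (digitPoly t n - digitPoly t m).Monic := by
  obtain ⟨hmon_n, hdeg_n⟩ := monic_digitPoly_and_natDegree t n
  obtain ⟨hmon_m, hdeg_m⟩ := monic_digitPoly_and_natDegree t m
  refine hmon_n.sub_of_left ?_
  rw [degree_eq_natDegree hmon_n.ne_zero, degree_eq_natDegree hmon_m.ne_zero, hdeg_n, hdeg_m]
  exact_mod_cast hmn

theorem aeval_digitPoly {S : Type*} [CommRing S] [Algebra R S] (β : S) (x : ℕ → S)
    (h0 : x 0 = 1) (hsucc : ∀ k, x (k + 1) = β * x k - algebraMap R S (t k)) (k : ℕ) :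
    aeval β (digitPoly t k) = x k := by
  induction k with
  | zero => simp [digitPoly_zero, h0]
  | succ k ih => simp [digitPoly_succ, ih, hsucc]

end digitPoly

theorem eq_zero_of_abs_pow_mul_le {β a C : ℝ} (hβ : 1 < β) (h : ∀ k : ℕ, |β ^ k * a| ≤ C) :
    a = 0 := by
  by_contra ha
  have ha' : 0 < |a| := abs_pos.mpr ha
  obtain ⟨k, hk⟩ := pow_unbounded_of_one_lt (C / |a|) hβ
  have hCk := h k
  rw [abs_mul, abs_of_pos (pow_pos (by linarith) k)] at hCk
  rw [div_lt_iff₀ ha'] at hk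
  linarith

theorem eq_of_bounded_of_eventually_periodic {β C : ℝ} (hβ : 1 < β) {x t : ℕ → ℝ}
    (hsucc : ∀ k, x (k + 1) = β * x k - t k) (hbound : ∀ k, |x k| ≤ C) {m p : ℕ}
    (hper : ∀ i, m ≤ i → t (i + p) = t i) :
    x (m + p) = x m := by
  have hgeom : ∀ k, x (m + k + p) - x (m + k) = β ^ k * (x (m + p) - x m) := by
    intro k
    induction k with
    | zero => simp
    | succ k ih =>
      have hsucc_p : x (m + (k + 1) + p) = β * x (m + k + p) - t (m + k) := by
        rw [show m + (k + 1) + p = m + k + p + 1 by omega, hsucc, hper _ (by omega)]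
      rw [hsucc_p, ← add_assoc, hsucc, pow_succ', mul_assoc, ← ih]
      ring
  refine sub_eq_zero.mp (eq_zero_of_abs_pow_mul_le hβ (C := C + C) fun k => ?_)
  rw [← hgeom]
  exact (abs_sub _ _).trans (add_le_add (hbound _) (hbound _))

theorem Tbeta_iterate_succ_one (β : ℝ) (k : ℕ) :
    (Tbeta β)^[k + 1] 1 = β * (Tbeta β)^[k] 1 - renyiDigit β k := by
  rw [Function.iterate_succ_apply']
  exact Int.self_sub_floor _

theorem abs_Tbeta_iterate_one_le (β : ℝ) (k : ℕ) : |(Tbeta β)^[k] 1| ≤ 1 := by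
  cases k with
  | zero => simp
  | succ k =>
    rw [Function.iterate_succ_apply', abs_of_nonneg (Int.fract_nonneg _)]
    exact (Int.fract_lt_one _).le

/-- every Parry number β (real β > 1 with eventually periodic
Rényi expansion of unity) is an algebraic integer, i.e. a root of a monic
polynomial with integer coefficients (its Parry polynomial). -/
theorem parry_number_isIntegral (β : ℝ) (hβ : 1 < β)
    (hper : ∃ m p : ℕ, 0 < p ∧ ∀ i : ℕ, m ≤ i → renyiDigit β (i + p) = renyiDigit β i) :
    IsIntegral ℤ β := by
  obtain ⟨m, p, hp, hper⟩ := hper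
  have horbit (k : ℕ) : aeval β (digitPoly (renyiDigit β) k) = (Tbeta β)^[k] 1 :=
    aeval_digitPoly _ β (fun k => (Tbeta β)^[k] 1) rfl (Tbeta_iterate_succ_one β) k
  have hperiodic : (Tbeta β)^[m + p] 1 = (Tbeta β)^[m] 1 :=
    eq_of_bounded_of_eventually_periodic hβ (Tbeta_iterate_succ_one β)
      (abs_Tbeta_iterate_one_le β) fun i hi => congrArg Int.cast (hper i hi)
  refine ⟨digitPoly (renyiDigit β) (m + p) - digitPoly (renyiDigit β) m,
    monic_digitPoly_sub _ (by omega), ?_⟩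
  rw [← aeval_def, map_sub, horbit, horbit, hperiodic, sub_self]
end

section
/- The set {Δ_k : k ∈ ℕ} of distances between consecutive β-integers, where Δ_k = Σ_{i=1}^∞ t_{i+k} β^{-i}, is finite if and only if the Rényi expansion of unity d_β(1) = t_1 t_2 ⋯ is eventually periodic (i.e., β is a Parry number). -/
/-- The distance `Δ_k = Σ_{i=1}^∞ t_{i+k} β^{-i}` (0-indexed digits). -/
noncomputable def distDelta (β : ℝ) (k : ℕ) : ℝ :=
  ∑' i : ℕ, (renyiDigit β (i + k) : ℝ) / β ^ (i + 1)

section EventuallyPeriodic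

variable {α : Type*}

theorem Set.finite_range_of_eventually_periodic {u : ℕ → α} {m p : ℕ} (hp : 0 < p)
    (hper : ∀ k, m ≤ k → u (k + p) = u k) : (Set.range u).Finite := by
  refine ((Set.finite_Iio (m + p)).image u).subset ?_
  rintro _ ⟨k, rfl⟩
  induction k using Nat.strong_induction_on with
  | _ k ih =>
    rcases lt_or_ge k (m + p) with hk | hk
    · exact ⟨k, hk, rfl⟩
    · obtain ⟨j, rfl⟩ : ∃ j, k = j + p := ⟨k - p, by omega⟩
      rw [hper j (by omega)]
      exact ih j (by omega)

theorem Function.exists_eventually_periodic_of_finite_range_iterate {f : α → α} {x : α}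
    (hfin : (Set.range fun n => f^[n] x).Finite) :
    ∃ m p : ℕ, 0 < p ∧ ∀ i, m ≤ i → f^[i + p] x = f^[i] x := by
  obtain ⟨a, b, hab, hne⟩ :=
    Function.not_injective_iff.1 fun hinj => Set.infinite_range_of_injective hinj hfin
  wlog hlt : a < b generalizing a b
  · exact this b a hab.symm hne.symm (by omega)
  have hperiodic : IsPeriodicPt f (b - a) (f^[a] x) := by
    rw [IsPeriodicPt, IsFixedPt, ← Function.iterate_add_apply, Nat.sub_add_cancel hlt.le, hab]
  refine ⟨a, b - a, by omega, fun i hi => ?_⟩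
  obtain ⟨j, rfl⟩ : ∃ j, i = j + a := ⟨i - a, by omega⟩
  rw [add_comm _ (b - a), Function.iterate_add_apply, Function.iterate_add_apply]
  exact (hperiodic.apply_iterate j).eq

end EventuallyPeriodic

section BetaExpansion

variable {β : ℝ}

theorem Tbeta_iterate_mem_Icc (k : ℕ) : (Tbeta β)^[k] 1 ∈ Set.Icc (0 : ℝ) 1 := by
  cases k with
  | zero => simp
  | succ k =>
    rw [Function.iterate_succ_apply']
    exact ⟨Int.fract_nonneg _, (Int.fract_lt_one _).le⟩

theorem Tbeta_iterate_succ (k : ℕ) :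
    (Tbeta β)^[k + 1] 1 = β * (Tbeta β)^[k] 1 - renyiDigit β k := by
  rw [Function.iterate_succ_apply', renyiDigit, Tbeta, Int.fract]

theorem renyiDigit_nonneg (hβ : 0 ≤ β) (k : ℕ) : 0 ≤ renyiDigit β k :=
  Int.floor_nonneg.2 (mul_nonneg hβ (Tbeta_iterate_mem_Icc k).1)

theorem sum_range_renyiDigit_div_pow (hβ : β ≠ 0) (k n : ℕ) :
    ∑ i ∈ Finset.range n, (renyiDigit β (i + k) : ℝ) / β ^ (i + 1)
      = (Tbeta β)^[k] 1 - (Tbeta β)^[k + n] 1 / β ^ n := by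
  induction n with
  | zero => simp
  | succ n ih =>
    rw [Finset.sum_range_succ, ih, ← add_assoc, Tbeta_iterate_succ, add_comm n k]
    field_simp
    ring

theorem hasSum_renyiDigit_div_pow (hβ : 1 < β) (k : ℕ) :
    HasSum (fun i => (renyiDigit β (i + k) : ℝ) / β ^ (i + 1)) ((Tbeta β)^[k] 1) := by
  have hβ0 : 0 < β := zero_lt_one.trans hβ
  have hnonneg (i : ℕ) : 0 ≤ (renyiDigit β (i + k) : ℝ) / β ^ (i + 1) :=
    div_nonneg (mod_cast renyiDigit_nonneg hβ0.le _) (by positivity)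
  have hrem : Filter.Tendsto (fun n => (Tbeta β)^[k + n] 1 / β ^ n) Filter.atTop (nhds 0) := by
    refine squeeze_zero (fun n => div_nonneg (Tbeta_iterate_mem_Icc _).1 (by positivity))
      (fun n => ?_)
      (tendsto_pow_atTop_nhds_zero_of_lt_one (by positivity) (inv_lt_one_of_one_lt₀ hβ))
    rw [inv_pow, ← one_div]
    exact div_le_div_of_nonneg_right (Tbeta_iterate_mem_Icc _).2 (by positivity)
  rw [hasSum_iff_tendsto_nat_of_nonneg hnonneg]
  simpa only [sum_range_renyiDigit_div_pow hβ0.ne', sub_zero] using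
    (tendsto_const_nhds (x := (Tbeta β)^[k] 1)).sub hrem

theorem distDelta_eq_Tbeta_iterate (hβ : 1 < β) (k : ℕ) : distDelta β k = (Tbeta β)^[k] 1 :=
  (hasSum_renyiDigit_div_pow hβ k).tsum_eq

theorem distDelta_add_eq_of_periodic {m p k : ℕ}
    (hper : ∀ i, m ≤ i → renyiDigit β (i + p) = renyiDigit β i) (hk : m ≤ k) :
    distDelta β (k + p) = distDelta β k := by
  unfold distDelta
  congr 1 with i
  rw [← add_assoc, hper _ (by omega)]

end BetaExpansion

/-- the set `{Δ_k : k ∈ ℕ}` of distances between consecutive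
β-integers is finite iff the Rényi expansion of unity of β is eventually
periodic (i.e. β is a Parry number). -/
theorem distDelta_finite_iff_parry (β : ℝ) (hβ : 1 < β) :
    (Set.range (distDelta β)).Finite ↔
      ∃ m p : ℕ, 0 < p ∧ ∀ i : ℕ, m ≤ i → renyiDigit β (i + p) = renyiDigit β i := by
  constructor
  · intro hfin
    rw [show distDelta β = fun k => (Tbeta β)^[k] 1 from funext (distDelta_eq_Tbeta_iterate hβ)]
      at hfin
    obtain ⟨m, p, hp, hper⟩ := Function.exists_eventually_periodic_of_finite_range_iterate hfin
    exact ⟨m, p, hp, fun i hi => by rw [renyiDigit, renyiDigit, hper i hi]⟩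
  · rintro ⟨m, p, hp, hper⟩
    exact Set.finite_range_of_eventually_periodic hp fun k hk =>
      distDelta_add_eq_of_periodic hper hk
end

section
/- Let β be a simple Parry number with d_β(1) = t_1 ⋯ t_m and Parry polynomial p(x) = x^m − t_1 x^{m-1} − ⋯ − t_m. Define Δ_i = β^i − Σ_{j=1}^{i} t_j β^{i-j} and ρ_i = β^{m-1-i}/Σ_{k=0}^{m-1} β^k for 0 ≤ i ≤ m−1. Then Σ_{i=0}^{m-1} ρ_i Δ_i = (β−1)/(β^m − 1) · p'(β). -/
open Finset Polynomial

variable {R : Type*} [CommRing R]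

theorem eval_derivative_X_pow_sub_sum (x : R) (a : ℕ → R) (m : ℕ) :
    (derivative ((X : R[X]) ^ m - ∑ j ∈ range m, C (a j) * X ^ (m - 1 - j))).eval x =
      m * x ^ (m - 1) - ∑ j ∈ range m, a j * ((m - 1 - j : ℕ) * x ^ (m - 1 - j - 1)) := by
  simp [derivative_X_pow, eval_finsetSum]

theorem pow_mul_sub_sum_eq (x : R) (a : ℕ → R) {m i : ℕ} (hi : i < m) :
    x ^ (m - 1 - i) * (x ^ i - ∑ j ∈ range i, a j * x ^ (i - 1 - j)) =
      x ^ (m - 1) - ∑ j ∈ range i, a j * x ^ (m - 1 - j - 1) := by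
  rw [mul_sub, ← pow_add, mul_sum, Nat.sub_add_cancel (by omega)]
  congr 1
  refine sum_congr rfl fun j hj => ?_
  rw [mul_left_comm, ← pow_add]
  congr 2
  have := mem_range.mp hj
  omega

theorem sum_pow_mul_sub_sum_eq_eval_derivative (x : R) (a : ℕ → R) (m : ℕ) :
    ∑ i ∈ range m, x ^ (m - 1 - i) * (x ^ i - ∑ j ∈ range i, a j * x ^ (i - 1 - j)) =
      (derivative ((X : R[X]) ^ m - ∑ j ∈ range m, C (a j) * X ^ (m - 1 - j))).eval x := by
  rw [eval_derivative_X_pow_sub_sum, sum_congr rfl fun i hi => pow_mul_sub_sum_eq x a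
    (mem_range.mp hi), sum_sub_distrib, sum_const, card_range, nsmul_eq_mul]
  congr 1
  simp only [range_eq_Ico]
  rw [← sum_Ico_Ico_comm']
  refine sum_congr rfl fun j _ => ?_
  rw [sum_const, Nat.card_Ico, nsmul_eq_mul, show m - (j + 1) = m - 1 - j by omega]
  ring

open Polynomial in
theorem freq_dot_distances_general (β : ℝ) (hβ : 1 < β)
    (m : ℕ) (t : ℕ → ℕ) :
    ∑ i ∈ Finset.range m,
        (β ^ (m - 1 - i) / ∑ k ∈ Finset.range m, β ^ k) *
          (β ^ i - ∑ j ∈ Finset.range i, (t j : ℝ) * β ^ (i - 1 - j)) =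
      (β - 1) / (β ^ m - 1) *
        Polynomial.eval β (Polynomial.derivative
          ((X : ℝ[X]) ^ m - ∑ j ∈ Finset.range m, C (t j : ℝ) * X ^ (m - 1 - j))) := by
  simp_rw [div_mul_eq_mul_div]
  rw [← sum_div, sum_pow_mul_sub_sum_eq_eval_derivative, geom_sum_eq hβ.ne', div_div_eq_mul_div]
  ring

open Polynomial in
/-- let β be a simple Parry number with `d_β(1) = t_1 ⋯ t_m` and
Parry polynomial `p(x) = x^m − t_1 x^{m-1} − ⋯ − t_m`. With
`Δ_i = β^i − Σ_{j=1}^i t_j β^{i−j}` and `ρ_i = β^{m−1−i} / Σ_{k=0}^{m−1} β^k`,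
one has `Σ_{i=0}^{m−1} ρ_i Δ_i = (β−1)/(β^m − 1) · p'(β)`. -/
theorem freq_dot_distances (β : ℝ) (hβ : 1 < β)
    (m : ℕ) (hm : 1 ≤ m) (t : ℕ → ℕ)
    (ht : ∀ i : ℕ, i < m → (t i : ℤ) = renyiDigit β i)
    (hsimple : ∀ i : ℕ, m ≤ i → renyiDigit β i = 0)
    (hlast : t (m - 1) ≠ 0) :
    ∑ i ∈ Finset.range m,
        (β ^ (m - 1 - i) / ∑ k ∈ Finset.range m, β ^ k) *
          (β ^ i - ∑ j ∈ Finset.range i, (t j : ℝ) * β ^ (i - 1 - j)) =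
      (β - 1) / (β ^ m - 1) *
        Polynomial.eval β (Polynomial.derivative
          ((X : ℝ[X]) ^ m - ∑ j ∈ Finset.range m, C (t j : ℝ) * X ^ (m - 1 - j))) :=
  freq_dot_distances_general β hβ m t
end

section
/- Let β = τ = (1+√5)/2. For every n ∈ ℕ, the n-th nonnegative τ-integer satisfies |b_n − c_τ n| ≤ 1/τ³, where c_τ = (τ² + 1)/τ³. -/
/-- The nonnegative β-integers: nonnegative reals whose β-expansion has
vanishing fractional part. -/
def ZbetaPlus (β : ℝ) : Set ℝ :=
  {x : ℝ | 0 ≤ x ∧ ∃ d : ℤ → ℕ, IsBetaExpansion β x d ∧ ∀ i : ℤ, i < 0 → d i = 0}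

/-- The β-integers: `ℤ_β = (−ℤ_β^+) ∪ ℤ_β^+`. -/
def Zbeta (β : ℝ) : Set ℝ := {x : ℝ | x ∈ ZbetaPlus β ∨ -x ∈ ZbetaPlus β}

/-!
Let `s` be the Zeckendorf set of `n`, i.e. `n = ∑_{i ∈ s} F_{i+2}` with `s` free of consecutive
integers. The greedy `τ`-expansions are exactly the words over `{0, 1}` without factor `11`, so the
nonnegative `τ`-integers are the sums `∑_{i ∈ s} τ^i`; both kinds of sums order such sets
colexicographically, hence `b_n = ∑_{i ∈ s} τ^i`. Binet's formula gives
`c_τ F_{i+2} = τ^i - ψ^(i+4)` with `ψ = -1/τ`, so `b_n - c_τ n = ψ^4 ∑_{i ∈ s} ψ^i`. The even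
and odd terms of the last sum have opposite signs, so it is bounded in absolute value by
`∑_k ψ^(2k) = τ`, and `ψ^4 τ = τ^(-3)`.
-/

open Finset Real
open scoped goldenRatio

/-- `s` is the set of positions of the digit `1` in a binary word without factor `11`. -/
def IsZeckendorf (s : Finset ℕ) : Prop := ∀ i ∈ s, i + 1 ∉ s

theorem IsZeckendorf.mono {s t : Finset ℕ} (hst : s ⊆ t) (ht : IsZeckendorf t) :
    IsZeckendorf s :=
  fun i hi hi1 => ht i (hst hi) (hst hi1)

structure IsFibonacciLike {α : Type*} [AddCommMonoid α] [PartialOrder α] (u : ℕ → α) : Prop where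
  pos_zero : 0 < u 0
  zero_lt_one : u 0 < u 1
  add_two (k : ℕ) : u (k + 2) = u (k + 1) + u k

namespace IsFibonacciLike

variable {α : Type*} [AddCommMonoid α] [PartialOrder α] [IsOrderedCancelAddMonoid α] {u : ℕ → α}

theorem pos (hu : IsFibonacciLike u) : ∀ k, 0 < u k
  | 0 => hu.pos_zero
  | 1 => hu.pos_zero.trans hu.zero_lt_one
  | k + 2 => by rw [hu.add_two]; exact add_pos (hu.pos (k + 1)) (hu.pos k)

theorem sum_lt_of_subset_range (hu : IsFibonacciLike u) {s : Finset ℕ} (hs : IsZeckendorf s) :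
    ∀ {k}, s ⊆ range k → ∑ i ∈ s, u i < u k
  | 0, h => by simpa [subset_empty.1 h] using hu.pos_zero
  | 1, h => (sum_le_sum_of_subset_of_nonneg h fun i _ _ => (hu.pos i).le).trans_lt
      (by simpa using hu.zero_lt_one)
  | k + 2, h => by
    by_cases hk : k + 1 ∈ s
    · have hrest : s.erase (k + 1) ⊆ range k := fun i hi => by
        have hik : i ≠ k := fun hik => hs i (mem_of_mem_erase hi) (hik ▸ hk)
        have := mem_range.1 (h (mem_of_mem_erase hi))
        have := ne_of_mem_erase hi
        exact mem_range.2 (by omega)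
      rw [← add_sum_erase s u hk, hu.add_two]
      exact add_lt_add_right (hu.sum_lt_of_subset_range (hs.mono (erase_subset _ _)) hrest) _
    · have hrest : s ⊆ range (k + 1) := fun i hi => by
        have := mem_range.1 (h hi)
        exact mem_range.2 (by have : i ≠ k + 1 := fun h' => hk (h' ▸ hi); omega)
      calc ∑ i ∈ s, u i < u (k + 1) := hu.sum_lt_of_subset_range hs hrest
        _ ≤ u (k + 2) := by rw [hu.add_two]; exact le_add_of_nonneg_right (hu.pos k).le

-- The largest index in which `s` and `t` differ outweighs everything below it.
theorem strictMonoOn_sum (hu : IsFibonacciLike u) :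
    StrictMonoOn (fun s : Colex (Finset ℕ) => ∑ i ∈ ofColex s, u i)
      {s | IsZeckendorf (ofColex s)} := by
  intro s hs t _ hst
  obtain ⟨a, hat, has, ha⟩ := Colex.lt_iff_exists_forall_lt.1 hst
  rw [← sum_sdiff_lt_sum_sdiff]
  calc ∑ i ∈ ofColex s \ ofColex t, u i < u a :=
        hu.sum_lt_of_subset_range (IsZeckendorf.mono sdiff_subset hs) fun b hb =>
          mem_range.2 (ha b (mem_sdiff.1 hb).1 (mem_sdiff.1 hb).2)
    _ ≤ ∑ i ∈ ofColex t \ ofColex s, u i :=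
        single_le_sum (fun i _ => (hu.pos i).le) (mem_sdiff.2 ⟨hat, has⟩)

theorem sum_lt_sum_iff (hu : IsFibonacciLike u) {s t : Finset ℕ} (hs : IsZeckendorf s)
    (ht : IsZeckendorf t) : ∑ i ∈ s, u i < ∑ i ∈ t, u i ↔ toColex s < toColex t :=
  hu.strictMonoOn_sum.lt_iff_lt (a := toColex s) (b := toColex t) hs ht

theorem eq_of_sum_eq (hu : IsFibonacciLike u) {s t : Finset ℕ} (hs : IsZeckendorf s)
    (ht : IsZeckendorf t) (h : ∑ i ∈ s, u i = ∑ i ∈ t, u i) : s = t :=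
  toColex_inj.1 (hu.strictMonoOn_sum.injOn (x₁ := toColex s) (x₂ := toColex t) hs ht h)

end IsFibonacciLike

theorem isFibonacciLike_fib_add_two : IsFibonacciLike fun i => Nat.fib (i + 2) where
  pos_zero := by decide
  zero_lt_one := by decide
  add_two k := by rw [Nat.fib_add_two (n := k + 2), add_comm]

theorem isFibonacciLike_goldenRatio_pow : IsFibonacciLike (φ ^ ·) where
  pos_zero := by simp
  zero_lt_one := by simpa using one_lt_goldenRatio
  add_two k := by linarith [goldenRatio_pow_sub_goldenRatio_pow k]

theorem exists_isZeckendorf_sum_fib_eq (n : ℕ) :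
    ∃ s, IsZeckendorf s ∧ ∑ i ∈ s, Nat.fib (i + 2) = n := by
  induction n using Nat.strong_induction_on with
  | _ n ih =>
  rcases n.eq_zero_or_pos with rfl | hn
  · exact ⟨∅, fun _ h => absurd h (notMem_empty _), rfl⟩
  obtain ⟨j, hj⟩ : ∃ j, Nat.greatestFib n = j + 2 :=
    ⟨_, (Nat.sub_add_cancel (Nat.le_greatestFib.2 hn : 2 ≤ _)).symm⟩
  have hle : Nat.fib (j + 2) ≤ n := hj ▸ Nat.fib_greatestFib_le n
  have hlt : n < Nat.fib (j + 1) + Nat.fib (j + 2) := by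
    simpa [hj, Nat.fib_add_two] using Nat.lt_fib_greatestFib_add_one n
  have hpos : 0 < Nat.fib (j + 2) := Nat.fib_pos.2 (by omega)
  obtain ⟨t, ht, htn⟩ := ih (n - Nat.fib (j + 2)) (by omega)
  have hbelow : ∀ i ∈ t, i + 1 < j := fun i hi => by
    by_contra h
    have h1 : Nat.fib (j + 1) ≤ Nat.fib (i + 2) := Nat.fib_mono (by omega)
    have h2 : Nat.fib (i + 2) ≤ ∑ i ∈ t, Nat.fib (i + 2) :=
      single_le_sum (f := fun i => Nat.fib (i + 2)) (fun _ _ => Nat.zero_le _) hi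
    omega
  refine ⟨insert j t, fun i hi hi1 => ?_, ?_⟩
  · rcases mem_insert.1 hi with rfl | hi
    · rcases mem_insert.1 hi1 with h | h
      · omega
      · have := hbelow _ h; omega
    · rcases mem_insert.1 hi1 with h | h
      · have := hbelow i hi; omega
      · exact ht i hi h
  · rw [sum_insert fun h => by have := hbelow j h; omega, htn]
    omega

section IntTsum

variable {α : Type*} [AddCommMonoid α] [TopologicalSpace α] {w : ℤ → α}

theorem tsum_int_eq_sum_range {N : ℕ} (hw : ∀ j : ℤ, j < 0 ∨ N ≤ j → w j = 0) :
    ∑' j, w j = ∑ k ∈ range N, w k := by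
  rw [tsum_eq_sum (s := (range N).map Nat.castEmbedding), sum_map]
  · rfl
  · intro j hj
    refine hw j (by_contra fun h => hj (mem_map.2 ⟨j.toNat, mem_range.2 (by omega), ?_⟩))
    simp only [Nat.castEmbedding_apply]
    omega

theorem tsum_subtype_lt_eq_sum_range (hw : ∀ j < 0, w j = 0) (i : ℤ) :
    ∑' j : {j : ℤ // j < i}, w j = ∑ k ∈ range i.toNat, w k := by
  refine (tsum_subtype {j : ℤ | j < i} w).trans ?_
  rw [tsum_int_eq_sum_range (N := i.toNat)]
  · refine sum_congr rfl fun k hk => Set.indicator_of_mem ?_ w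
    have := mem_range.1 hk
    show (k : ℤ) < i
    omega
  · rintro j (hj | hj)
    · simp [hw j hj]
    · exact Set.indicator_of_notMem (s := {j : ℤ | j < i}) (show ¬ j < i by omega) w

end IntTsum

theorem sum_goldenRatio_pow_mem_zbetaPlus {s : Finset ℕ} (hs : IsZeckendorf s) :
    ∑ k ∈ s, φ ^ k ∈ ZbetaPlus φ := by
  obtain ⟨N, hN⟩ := s.exists_nat_subset_range
  let d : ℤ → ℕ := fun j => if 0 ≤ j ∧ j.toNat ∈ s then 1 else 0
  have hvanish (j : ℤ) (hj : j < 0 ∨ N ≤ j) : d j = 0 :=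
    if_neg fun h => by have := mem_range.1 (hN h.2); omega
  have hw (j : ℤ) (hj : j < 0 ∨ N ≤ j) : (d j : ℝ) * φ ^ j = 0 := by
    rw [hvanish j hj, Nat.cast_zero, zero_mul]
  have hd (k : ℕ) : (d k : ℝ) * φ ^ (k : ℤ) = if k ∈ s then φ ^ k else 0 := by
    by_cases hk : k ∈ s <;> simp [d, hk]
  refine ⟨sum_nonneg fun k _ => by positivity, d,
    ⟨⟨N, fun j hj => hvanish j (Or.inr hj.le)⟩, ?_, fun i => ?_⟩, fun j hj => hvanish j (Or.inl hj)⟩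
  · rw [tsum_int_eq_sum_range hw, sum_congr rfl fun k _ => hd k, sum_ite_mem, inter_eq_right.2 hN]
  · rw [tsum_subtype_lt_eq_sum_range (fun j hj => hw j (Or.inl hj)),
      sum_congr rfl fun k _ => hd k, sum_ite_mem]
    rcases le_or_gt 0 i with hi | hi
    · lift i to ℕ using hi
      rw [Int.toNat_natCast, zpow_natCast]
      exact isFibonacciLike_goldenRatio_pow.sum_lt_of_subset_range (hs.mono inter_subset_right)
        inter_subset_left
    · simpa [Int.toNat_of_nonpos hi.le] using zpow_pos goldenRatio_pos i

theorem exists_isZeckendorf_sum_goldenRatio_pow_eq {x : ℝ} (hx : x ∈ ZbetaPlus φ) :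
    ∃ s, IsZeckendorf s ∧ ∑ k ∈ s, φ ^ k = x := by
  obtain ⟨-, d, ⟨⟨K, hK⟩, rfl, hgreedy⟩, hneg⟩ := hx
  have hw : ∀ j < 0, (d j : ℝ) * φ ^ j = 0 := fun j hj => by simp [hneg j hj]
  have hlt (m : ℕ) : ∑ k ∈ range m, (d k : ℝ) * φ ^ k < φ ^ m := by
    simpa [tsum_subtype_lt_eq_sum_range hw] using hgreedy m
  have hterm (k : ℕ) : 0 ≤ (d k : ℝ) * φ ^ k := by positivity
  have hdigit (k : ℕ) : d k ≤ 1 := by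
    have h := hlt (k + 1)
    rw [sum_range_succ, pow_succ] at h
    have h' : (d k : ℝ) < φ :=
      lt_of_mul_lt_mul_left (by linarith [sum_nonneg fun i (_ : i ∈ range k) => hterm i])
        (pow_pos goldenRatio_pos k).le
    have : (d k : ℝ) < 2 := h'.trans goldenRatio_lt_two
    exact_mod_cast Nat.lt_succ_iff.1 (by exact_mod_cast this)
  have hsparse (k : ℕ) (hk : d k = 1) : d (k + 1) ≠ 1 := fun hk1 => by
    have h := hlt (k + 2)
    rw [sum_range_succ, sum_range_succ, isFibonacciLike_goldenRatio_pow.add_two k] at h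
    push_cast [hk, hk1] at h
    linarith [sum_nonneg fun i (_ : i ∈ range k) => hterm i]
  refine ⟨(range (K.toNat + 1)).filter fun k => d k = 1, fun k hk hk1 => ?_, ?_⟩
  · exact hsparse k (mem_filter.1 hk).2 (mem_filter.1 hk1).2
  · rw [tsum_int_eq_sum_range (N := K.toNat + 1), sum_filter]
    · refine sum_congr rfl fun k _ => ?_
      rcases Nat.le_one_iff_eq_zero_or_eq_one.1 (hdigit k) with h | h <;> simp [h]
    · rintro j (hj | hj)
      · exact hw j hj
      · simp [hK j (by omega)]

theorem abs_sum_pow_le {q : ℝ} (hq1 : -1 < q) (hq0 : q ≤ 0) (s : Finset ℕ) :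
    |∑ i ∈ s, q ^ i| ≤ (1 - q ^ 2)⁻¹ := by
  have habs : |q| < 1 := abs_lt.2 ⟨hq1, by linarith⟩
  have habs' : |-q| < 1 := by rwa [abs_neg]
  have hs := summable_geometric_of_abs_lt_one habs
  have hs' := summable_geometric_of_abs_lt_one habs'
  have hpow (i : ℕ) : |q ^ i| ≤ (-q) ^ i := by rw [abs_pow, abs_of_nonpos hq0]
  -- `q ^ i + (-q) ^ i` and `q ^ i - (-q) ^ i` are twice the even and the odd terms.
  have hupper : 2 * ∑ i ∈ s, q ^ i ≤ (1 - q)⁻¹ + (1 + q)⁻¹ := by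
    rw [mul_sum]
    calc ∑ i ∈ s, 2 * q ^ i ≤ ∑ i ∈ s, (q ^ i + (-q) ^ i) :=
          sum_le_sum fun i _ => by linarith [le_abs_self (q ^ i), hpow i]
      _ ≤ ∑' i, (q ^ i + (-q) ^ i) :=
          (hs.add hs').sum_le_tsum s fun i _ => by linarith [neg_abs_le (q ^ i), hpow i]
      _ = (1 - q)⁻¹ + (1 + q)⁻¹ := by
          rw [hs.tsum_add hs', tsum_geometric_of_abs_lt_one habs,
            tsum_geometric_of_abs_lt_one habs', sub_neg_eq_add]
  have hlower : -(2 * ∑ i ∈ s, q ^ i) ≤ (1 + q)⁻¹ - (1 - q)⁻¹ := by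
    rw [mul_sum, ← sum_neg_distrib]
    calc ∑ i ∈ s, -(2 * q ^ i) ≤ ∑ i ∈ s, ((-q) ^ i - q ^ i) :=
          sum_le_sum fun i _ => by linarith [neg_abs_le (q ^ i), hpow i]
      _ ≤ ∑' i, ((-q) ^ i - q ^ i) :=
          (hs'.sub hs).sum_le_tsum s fun i _ => by linarith [le_abs_self (q ^ i), hpow i]
      _ = (1 + q)⁻¹ - (1 - q)⁻¹ := by
          rw [hs'.tsum_sub hs, tsum_geometric_of_abs_lt_one habs,
            tsum_geometric_of_abs_lt_one habs', sub_neg_eq_add]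
  have h1 : 1 - q ≠ 0 := by linarith
  have h2 : 1 + q ≠ 0 := by linarith
  have h3 : 1 - q ^ 2 ≠ 0 := by nlinarith
  have hpos : 0 < (1 - q ^ 2)⁻¹ := inv_pos.2 (by nlinarith)
  have hplus : (1 - q)⁻¹ + (1 + q)⁻¹ = 2 * (1 - q ^ 2)⁻¹ := by field_simp; ring
  have hminus : (1 + q)⁻¹ - (1 - q)⁻¹ = 2 * -q * (1 - q ^ 2)⁻¹ := by field_simp; ring
  rw [abs_le]
  constructor <;> nlinarith

theorem goldenRatio_sq_add_one_div_pow_three_mul_fib (i : ℕ) :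
    (φ ^ 2 + 1) / φ ^ 3 * Nat.fib (i + 2) = φ ^ i - ψ ^ (i + 4) := by
  -- `(φ^2 + 1) / φ^3 = √5 ψ^2`, and Binet gives `√5 F_{i+2} = φ^(i+2) - ψ^(i+2)`.
  have hφψ : φ * ψ = -1 := goldenRatio_mul_goldenConj
  have hc : (φ ^ 2 + 1) / φ ^ 3 = (φ - ψ) * ψ ^ 2 := by
    rw [div_eq_iff (by positivity)]
    linear_combination (φ ^ 2 * (1 - φ * ψ) + 1 - φ * ψ + (φ * ψ) ^ 2) * hφψ
  rw [hc]
  linear_combination ψ ^ 2 * (goldenRatio_mul_fib_succ_add_fib (i + 1) -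
    goldenConj_mul_fib_succ_add_fib (i + 1)) + φ ^ i * (φ * ψ - 1) * hφψ

theorem abs_sum_goldenRatio_pow_sub_le (s : Finset ℕ) :
    |∑ i ∈ s, φ ^ i - (φ ^ 2 + 1) / φ ^ 3 * ((∑ i ∈ s, Nat.fib (i + 2) : ℕ) : ℝ)| ≤
      1 / φ ^ 3 := by
  have hsum : ∑ i ∈ s, φ ^ i - (φ ^ 2 + 1) / φ ^ 3 * ((∑ i ∈ s, Nat.fib (i + 2) : ℕ) : ℝ) =
      ψ ^ 4 * ∑ i ∈ s, ψ ^ i := by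
    push_cast
    simp only [mul_sum, ← sum_sub_distrib, goldenRatio_sq_add_one_div_pow_three_mul_fib]
    exact sum_congr rfl fun i _ => by ring
  have hψ : (1 - ψ ^ 2)⁻¹ = φ := by
    rw [goldenConj_sq, show 1 - (ψ + 1) = -ψ by ring, inv_neg, inv_goldenConj, neg_neg]
  rw [hsum, abs_mul, abs_of_nonneg (by positivity)]
  calc ψ ^ 4 * |∑ i ∈ s, ψ ^ i| ≤ ψ ^ 4 * φ := by
        rw [← hψ]
        exact mul_le_mul_of_nonneg_left
          (abs_sum_pow_le neg_one_lt_goldenConj goldenConj_neg.le s) (by positivity)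
    _ = 1 / φ ^ 3 := by
        rw [one_div, ← inv_pow, inv_goldenRatio]
        linear_combination ψ ^ 3 * goldenConj_mul_goldenRatio

theorem exists_isZeckendorf_of_range_eq_zbetaPlus {b : ℕ → ℝ} (hmono : StrictMono b)
    (hrange : Set.range b = ZbetaPlus φ) (n : ℕ) :
    ∃ s, IsZeckendorf s ∧ ∑ i ∈ s, Nat.fib (i + 2) = n ∧ b n = ∑ i ∈ s, φ ^ i := by
  choose z hz hzn using exists_isZeckendorf_sum_fib_eq
  have hzf : StrictMono fun n => ∑ i ∈ z n, φ ^ i := fun m n hmn => by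
    rw [isFibonacciLike_goldenRatio_pow.sum_lt_sum_iff (hz m) (hz n),
      ← isFibonacciLike_fib_add_two.sum_lt_sum_iff (hz m) (hz n), hzn, hzn]
    exact hmn
  have hz_sum {s : Finset ℕ} (hs : IsZeckendorf s) : z (∑ i ∈ s, Nat.fib (i + 2)) = s :=
    isFibonacciLike_fib_add_two.eq_of_sum_eq (hz _) hs (hzn _)
  have hb : b = fun n => ∑ i ∈ z n, φ ^ i := by
    refine (hmono.range_inj hzf).1 (hrange.trans (Set.ext fun x => ⟨fun hx => ?_, ?_⟩))
    · obtain ⟨s, hs, rfl⟩ := exists_isZeckendorf_sum_goldenRatio_pow_eq hx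
      exact ⟨∑ i ∈ s, Nat.fib (i + 2), by simp only [hz_sum hs]⟩
    · rintro ⟨n, rfl⟩
      exact sum_goldenRatio_pow_mem_zbetaPlus (hz n)
  exact ⟨z n, hz n, hzn n, by rw [hb]⟩

theorem golden_mean_beta_integer_bound_general (τ : ℝ) (hτ : τ = (1 + Real.sqrt 5) / 2)
    (b : ℕ → ℝ) (hmono : StrictMono b)
    (hrange : Set.range b = ZbetaPlus τ) :
    ∀ n : ℕ, |b n - (τ ^ 2 + 1) / τ ^ 3 * n| ≤ 1 / τ ^ 3 := by
  obtain rfl : τ = φ := hτ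
  intro n
  obtain ⟨s, -, rfl, hbn⟩ := exists_isZeckendorf_of_range_eq_zbetaPlus hmono hrange n
  rw [hbn]
  exact abs_sum_goldenRatio_pow_sub_le s

/-- for the golden mean τ = (1+√5)/2, the n-th nonnegative
τ-integer satisfies `|b_n − c_τ n| ≤ 1/τ³`, where `c_τ = (τ² + 1)/τ³`. -/
theorem golden_mean_beta_integer_bound (τ : ℝ) (hτ : τ = (1 + Real.sqrt 5) / 2)
    (b : ℕ → ℝ) (hmono : StrictMono b) (hb0 : b 0 = 0)
    (hrange : Set.range b = ZbetaPlus τ) :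
    ∀ n : ℕ, |b n - (τ ^ 2 + 1) / τ ^ 3 * n| ≤ 1 / τ ^ 3 :=
  golden_mean_beta_integer_bound_general τ hτ b hmono hrange
end
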